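/- Consider the replicator-type ODE dϑⁱ_k/dt = c_i·ϑⁱ_k·(ḡⁱ(ϑ⃗) − gⁱ_k(ϑ⃗)) with constants c_i = η_i/‖η‖₁ > 0, where gⁱ(ϑ⃗) = 2A(ϑⁱ + Σ_j λ_j ϑʲ) − 2b and ḡⁱ = Σ_l ϑⁱ_l gⁱ_l. Along any solution, d/dt Φ(ϑ⃗(t)) = −(1/(2‖η‖₁))·Σ_i λ_i η_i Σ_{k,l} ϑⁱ_k ϑⁱ_l (gⁱ_k − gⁱ_l)² ≤ 0, where Φ(θ⃗) = (Σ_i λ_iθⁱ)ᵀA(Σ_i λ_iθⁱ) + Σ_i λ_i(θⁱ)ᵀAθⁱ − 2bᵀΣ_i λ_iθⁱ. Moreover this derivative is zero exactly at fixed points of the ODE. -/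

import Mathlib

/-! Since `A` is symmetric, `∂Φ/∂θⁱ = λᵢ gⁱ`, so by the chain rule `dΦ/dt = Σᵢ λᵢ ⟨θ̇ⁱ, gⁱ⟩`.
Along the replicator field `⟨θ̇ⁱ, gⁱ⟩ = cᵢ Σₖ θⁱₖ (ḡⁱ - gⁱₖ) gⁱₖ`, and for a probability vector `u`
the sum `Σₖ uₖ (ḡ - gₖ) gₖ = ḡ² - Σₖ uₖ gₖ²` is minus the variance of `g` under `u`, i.e.
`-½ Σₖₗ uₖ uₗ (gₖ - gₗ)²`. This is `≤ 0`, and vanishes iff `g` is constant on the support of `u`,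
which is the rest-point condition `uₖ (ḡ - gₖ) = 0`. -/

open Matrix

section Calculus

variable {ι : Type*} {t : ℝ}

theorem hasDerivAt_dotProduct [Fintype ι] {x y : ℝ → ι → ℝ} {x' y' : ι → ℝ}
    (hx : ∀ k, HasDerivAt (fun s => x s k) (x' k) t)
    (hy : ∀ k, HasDerivAt (fun s => y s k) (y' k) t) :
    HasDerivAt (fun s => x s ⬝ᵥ y s) (x' ⬝ᵥ y t + x t ⬝ᵥ y') t := by
  simp only [dotProduct, ← Finset.sum_add_distrib]
  exact HasDerivAt.fun_sum fun k _ => (hx k).mul (hy k)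

theorem hasDerivAt_mulVec_apply [Fintype ι] {κ : Type*} (A : Matrix κ ι ℝ) {x : ℝ → ι → ℝ}
    {x' : ι → ℝ}
    (hx : ∀ k, HasDerivAt (fun s => x s k) (x' k) t) (k : κ) :
    HasDerivAt (fun s => (A *ᵥ x s) k) ((A *ᵥ x') k) t := by
  simp only [mulVec, dotProduct]
  exact HasDerivAt.fun_sum fun l _ => (hx l).const_mul (A k l)

theorem hasDerivAt_sum_smul_apply {κ : Type*} [Fintype κ] (c : κ → ℝ) {x : ℝ → κ → ι → ℝ}
    {x' : κ → ι → ℝ} (hx : ∀ j k, HasDerivAt (fun s => x s j k) (x' j k) t) (k : ι) :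
    HasDerivAt (fun s => (∑ j, c j • x s j) k) ((∑ j, c j • x' j) k) t := by
  simp only [Finset.sum_apply, Pi.smul_apply, smul_eq_mul]
  exact HasDerivAt.fun_sum fun j _ => (hx j k).const_mul (c j)

theorem Matrix.IsSymm.dotProduct_mulVec_comm [Fintype ι] {A : Matrix ι ι ℝ} (hA : A.IsSymm)
    (x y : ι → ℝ) :
    x ⬝ᵥ A *ᵥ y = y ⬝ᵥ A *ᵥ x := by
  rw [dotProduct_mulVec, ← mulVec_transpose, hA.eq, dotProduct_comm]

theorem hasDerivAt_dotProduct_mulVec_self [Fintype ι] {A : Matrix ι ι ℝ} (hA : A.IsSymm)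
    {x : ℝ → ι → ℝ} {x' : ι → ℝ} (hx : ∀ k, HasDerivAt (fun s => x s k) (x' k) t) :
    HasDerivAt (fun s => x s ⬝ᵥ A *ᵥ x s) (2 * (x' ⬝ᵥ A *ᵥ x t)) t := by
  convert hasDerivAt_dotProduct hx (hasDerivAt_mulVec_apply A hx) using 1
  rw [hA.dotProduct_mulVec_comm (x t)]
  ring

end Calculus

namespace Replicator

variable {ι κ : Type*} [Fintype ι] [Fintype κ]
  (A : Matrix κ κ ℝ) (b : κ → ℝ) (lam : ι → ℝ)

def potential (θ : ι → κ → ℝ) : ℝ :=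
  (∑ j, lam j • θ j) ⬝ᵥ A *ᵥ (∑ j, lam j • θ j) + ∑ j, lam j * (θ j ⬝ᵥ A *ᵥ θ j)
    - 2 * (b ⬝ᵥ ∑ j, lam j • θ j)

def cost (θ : ι → κ → ℝ) (i : ι) (k : κ) : ℝ :=
  2 * ((A *ᵥ (θ i + ∑ j, lam j • θ j)) k - b k)

theorem dotProduct_cost (θ : ι → κ → ℝ) (i : ι) (v : κ → ℝ) :
    v ⬝ᵥ cost A b lam θ i
      = 2 * (v ⬝ᵥ A *ᵥ θ i + v ⬝ᵥ A *ᵥ (∑ j, lam j • θ j) - v ⬝ᵥ b) := by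
  have : cost A b lam θ i = (2 : ℝ) • (A *ᵥ θ i + A *ᵥ (∑ j, lam j • θ j) - b) := by
    ext k; simp [cost, mulVec_add]
  rw [this, dotProduct_smul, dotProduct_sub, dotProduct_add, smul_eq_mul]

variable {A} in
theorem hasDerivAt_potential (hA : A.IsSymm) {θ : ℝ → ι → κ → ℝ} {v : ι → κ → ℝ} {t : ℝ}
    (hθ : ∀ i k, HasDerivAt (fun s => θ s i k) (v i k) t) :
    HasDerivAt (fun s => potential A b lam (θ s))
      (∑ i, lam i * (v i ⬝ᵥ cost A b lam (θ t) i)) t := by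
  have hmean := hasDerivAt_sum_smul_apply lam hθ
  have hquad := hasDerivAt_dotProduct_mulVec_self hA hmean
  have hself : HasDerivAt (fun s => ∑ j, lam j * (θ s j ⬝ᵥ A *ᵥ θ s j))
      (∑ j, lam j * (2 * (v j ⬝ᵥ A *ᵥ θ t j))) t :=
    HasDerivAt.fun_sum fun j _ => (hasDerivAt_dotProduct_mulVec_self hA (hθ j)).const_mul (lam j)
  have hlin := (hasDerivAt_dotProduct (fun k => hasDerivAt_const t (b k)) hmean).const_mul 2
  refine ((hquad.fun_add hself).fun_sub hlin).congr_deriv ?_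
  simp only [← Pi.zero_def, dotProduct_cost, sum_dotProduct, smul_dotProduct, smul_eq_mul,
    zero_dotProduct, dotProduct_comm b, zero_add, Finset.mul_sum, ← Finset.sum_add_distrib,
    ← Finset.sum_sub_distrib]
  exact Finset.sum_congr rfl fun i _ => by ring

end Replicator

section Spread

variable {κ : Type*} [Fintype κ] {u : κ → ℝ} (g : κ → ℝ)

theorem sum_mul_sub_mean_mul_eq (hu : ∑ k, u k = 1) :
    ∑ k, u k * ((∑ l, u l * g l) - g k) * g k
      = -(∑ k, ∑ l, u k * u l * (g k - g l) ^ 2) / 2 := by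
  have hrow : ∀ k, ∑ l, u k * u l * (g k - g l) ^ 2
      = u k * g k ^ 2 * ∑ l, u l - 2 * (u k * g k) * ∑ l, u l * g l
        + u k * ∑ l, u l * g l ^ 2 := by
    intro k
    simp only [Finset.mul_sum, ← Finset.sum_sub_distrib, ← Finset.sum_add_distrib]
    exact Finset.sum_congr rfl fun l _ => by ring
  set m := ∑ l, u l * g l
  set q := ∑ l, u l * g l ^ 2
  have hlhs : ∑ k, u k * (m - g k) * g k = m * m - q := by
    rw [Finset.mul_sum, ← Finset.sum_sub_distrib]
    exact Finset.sum_congr rfl fun k _ => by ring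
  have hrhs : ∑ k, ∑ l, u k * u l * (g k - g l) ^ 2 = 2 * q - 2 * (m * m) := by
    simp only [hrow, hu, mul_one, Finset.sum_add_distrib, Finset.sum_sub_distrib,
      ← Finset.mul_sum, ← Finset.sum_mul, one_mul]
    ring
  rw [hlhs, hrhs]
  ring

theorem sum_sum_mul_mul_sub_sq_nonneg (hu : ∀ k, 0 ≤ u k) :
    0 ≤ ∑ k, ∑ l, u k * u l * (g k - g l) ^ 2 :=
  Finset.sum_nonneg fun k _ => Finset.sum_nonneg fun l _ =>
    mul_nonneg (mul_nonneg (hu k) (hu l)) (sq_nonneg _)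

theorem sum_sum_mul_mul_sub_sq_eq_zero_iff (hu : u ∈ stdSimplex ℝ κ) :
    ∑ k, ∑ l, u k * u l * (g k - g l) ^ 2 = 0 ↔ ∀ k, u k * ((∑ l, u l * g l) - g k) = 0 := by
  constructor
  · intro h k
    have hrow_nonneg : ∀ k, 0 ≤ ∑ l, u k * u l * (g k - g l) ^ 2 := fun k =>
      Finset.sum_nonneg fun l _ => mul_nonneg (mul_nonneg (hu.1 k) (hu.1 l)) (sq_nonneg _)
    have hrow : ∑ l, u k * u l * (g k - g l) ^ 2 = 0 :=
      (Finset.sum_eq_zero_iff_of_nonneg fun k _ => hrow_nonneg k).1 h k (Finset.mem_univ k)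
    have hterm : ∀ l, u k * u l * (g k - g l) ^ 2 = 0 := fun l =>
      (Finset.sum_eq_zero_iff_of_nonneg fun l _ =>
        mul_nonneg (mul_nonneg (hu.1 k) (hu.1 l)) (sq_nonneg _)).1 hrow l (Finset.mem_univ l)
    calc u k * ((∑ l, u l * g l) - g k) = ∑ l, u k * u l * (g l - g k) := by
          simp only [mul_sub, Finset.sum_sub_distrib, mul_assoc, ← Finset.mul_sum,
            ← Finset.sum_mul, hu.2, one_mul]
      _ = 0 := Finset.sum_eq_zero fun l _ => by
          rcases mul_eq_zero.1 (hterm l) with h | h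
          · rw [h, zero_mul]
          · rw [sq_eq_zero_iff, sub_eq_zero] at h; rw [h, sub_self, mul_zero]
  · intro h
    have := sum_mul_sub_mean_mul_eq g hu.2
    simp only [h, zero_mul, Finset.sum_const_zero] at this
    linarith

end Spread

theorem potential_decreases_along_replicator_ode (n d : ℕ)
    (A : Matrix (Fin d) (Fin d) ℝ) (hA : A.IsSymm) (b : Fin d → ℝ)
    (lam η : Fin n → ℝ) (hlam : ∀ i, 0 < lam i) (hη : ∀ i, 0 < η i)
    (ϑ : ℝ → Fin n → Fin d → ℝ)
    (hsimplex : ∀ t i, ϑ t i ∈ stdSimplex ℝ (Fin d)) :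
    let g : (Fin n → Fin d → ℝ) → Fin n → Fin d → ℝ := fun θ i k =>
      2 * (A.mulVec (θ i + ∑ j, lam j • θ j) k - b k)
    let gbar : (Fin n → Fin d → ℝ) → Fin n → ℝ := fun θ i => ∑ l, θ i l * g θ i l
    let Φ : (Fin n → Fin d → ℝ) → ℝ := fun θ =>
      (∑ j, lam j • θ j) ⬝ᵥ A.mulVec (∑ j, lam j • θ j)
        + ∑ j, lam j * (θ j ⬝ᵥ A.mulVec (θ j))
        - 2 * (b ⬝ᵥ ∑ j, lam j • θ j)
    let D : ℝ → ℝ := fun t =>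
      -(1 / (2 * ∑ j, η j)) * ∑ i, lam i * η i *
        ∑ k, ∑ l, ϑ t i k * ϑ t i l * (g (ϑ t) i k - g (ϑ t) i l) ^ 2
    (∀ t i k, HasDerivAt (fun s => ϑ s i k)
        ((η i / ∑ j, η j) * ϑ t i k * (gbar (ϑ t) i - g (ϑ t) i k)) t) →
      ∀ t, HasDerivAt (fun s => Φ (ϑ s)) (D t) t ∧ D t ≤ 0 ∧
        (D t = 0 ↔ ∀ i k, ϑ t i k * (gbar (ϑ t) i - g (ϑ t) i k) = 0) := by
  intro g gbar Φ D hode t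
  set S : Fin n → ℝ := fun i => ∑ k, ∑ l, ϑ t i k * ϑ t i l * (g (ϑ t) i k - g (ϑ t) i l) ^ 2
  set w : Fin n → ℝ := fun i => lam i * η i / (2 * ∑ j, η j)
  have hw : ∀ i, 0 < w i := fun i =>
    have := Finset.sum_pos (fun j _ => hη j) ⟨i, Finset.mem_univ i⟩
    div_pos (mul_pos (hlam i) (hη i)) (by positivity)
  have hS : ∀ i, 0 ≤ S i := fun i => sum_sum_mul_mul_sub_sq_nonneg _ (hsimplex t i).1
  have hD : D t = -∑ i, w i * S i := by
    change -(1 / (2 * ∑ j, η j)) * ∑ i, lam i * η i * S i = _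
    rw [neg_mul, Finset.mul_sum]
    exact congrArg _ (Finset.sum_congr rfl fun i _ => by simp only [w]; ring)
  refine ⟨?_, ?_, ?_⟩
  · refine (Replicator.hasDerivAt_potential b lam hA (hode t)).congr_deriv ?_
    rw [hD, ← Finset.sum_neg_distrib]
    refine Finset.sum_congr rfl fun i _ => ?_
    have hfield : ∑ k, (η i / ∑ j, η j) * ϑ t i k * (gbar (ϑ t) i - g (ϑ t) i k) * g (ϑ t) i k
        = (η i / ∑ j, η j) * (-S i / 2) := by
      rw [← sum_mul_sub_mean_mul_eq (g (ϑ t) i) (hsimplex t i).2, Finset.mul_sum]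
      exact Finset.sum_congr rfl fun k _ => by ring
    calc _ = lam i * ((η i / ∑ j, η j) * (-S i / 2)) := congrArg (lam i * ·) hfield
      _ = -(w i * S i) := by simp only [w]; ring
  · rw [hD]
    exact neg_nonpos.2 (Finset.sum_nonneg fun i _ => mul_nonneg (hw i).le (hS i))
  · rw [hD, neg_eq_zero, Finset.sum_eq_zero_iff_of_nonneg fun i _ => mul_nonneg (hw i).le (hS i)]
    simp only [Finset.mem_univ, true_implies, mul_eq_zero, (hw _).ne', false_or, S,
      sum_sum_mul_mul_sub_sq_eq_zero_iff _ (hsimplex t _)]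
    rfl
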